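/- The partition structure obtained from g(λ) = n!/[θ]_n ∏_{j=1}^ℓ 1/(λ_j h_θ(Λ_j)) does not belong to the Ewens–Pitman two-parameter family: for n = 5, the probability g(5) = 5!/([θ]_5 · 5 · h_θ(5)) of the one-part composition cannot, for any θ > 0, be matched simultaneously with g(n) for n = 1,...,5 by an Ewens–Pitman (α',θ') partition structure's probability of a single block, which equals [1-α']_{n-1}/[1+θ']_{n-1}. -/

import Mathlib

noncomputable def risingFact (x : ℝ) (k : ℕ) : ℝ := ∏ i ∈ Finset.range k, (x + i)

noncomputable def genHarmonic (θ : ℝ) (k : ℕ) : ℝ := ∑ i ∈ Finset.range k, 1 / (θ + i)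

/-!
Compare consecutive ratios. For Ewens–Pitman, `p (n + 1) / p n = (n - α') / (n + θ')`; for the
formula, `g n = (n - 1)! / N n` with `N k = [θ]_k h_θ(k)` (a polynomial in `θ`), so
`g (n + 1) / g n = n N n / N (n + 1)`. Matching the ratios for `n = 1, 2, 3` gives three equations
linear in `α'` and `θ'`, whose compatibility condition `θ ^ 3 (2 θ ^ 2 + 3 θ + 2) = 0` fails for
`θ > 0`.
-/

lemma risingFact_succ (x : ℝ) (k : ℕ) : risingFact x (k + 1) = risingFact x k * (x + k) :=
  Finset.prod_range_succ _ _

lemma risingFact_pos {x : ℝ} (hx : 0 < x) (k : ℕ) : 0 < risingFact x k :=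
  Finset.prod_pos fun _ _ => by positivity

lemma genHarmonic_pos {θ : ℝ} (hθ : 0 < θ) {k : ℕ} (hk : 0 < k) : 0 < genHarmonic θ k :=
  Finset.sum_pos (fun _ _ => by positivity) (Finset.nonempty_range_iff.mpr hk.ne')

lemma risingFact_mul_genHarmonic_of_le_four {θ : ℝ} (hθ : 0 < θ) :
    risingFact θ 1 * genHarmonic θ 1 = 1 ∧
    risingFact θ 2 * genHarmonic θ 2 = 2 * θ + 1 ∧
    risingFact θ 3 * genHarmonic θ 3 = 3 * θ ^ 2 + 6 * θ + 2 ∧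
    risingFact θ 4 * genHarmonic θ 4 = 4 * θ ^ 3 + 18 * θ ^ 2 + 22 * θ + 6 := by
  simp only [risingFact, genHarmonic, Finset.prod_range_succ, Finset.sum_range_succ,
    Finset.prod_range_zero, Finset.sum_range_zero]
  push_cast
  refine ⟨?_, ?_, ?_, ?_⟩ <;> field_simp <;> ring

lemma ewensPitman_eq_singleBlock_iff {θ α' θ' : ℝ} (hθ : 0 < θ) (hθ' : 0 < 1 + θ') (m : ℕ) :
    risingFact (1 - α') m / risingFact (1 + θ') m
        = ((m + 1).factorial : ℝ) / (risingFact θ (m + 1) * (m + 1 : ℕ) * genHarmonic θ (m + 1)) ↔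
      risingFact (1 - α') m * (risingFact θ (m + 1) * genHarmonic θ (m + 1))
        = m.factorial * risingFact (1 + θ') m := by
  have := risingFact_pos hθ' m
  have := risingFact_pos hθ (m + 1)
  have := genHarmonic_pos hθ m.succ_pos
  rw [Nat.factorial_succ, div_eq_div_iff (by positivity) (by positivity)]
  push_cast
  convert mul_right_inj' (show (m : ℝ) + 1 ≠ 0 by positivity) using 2 <;> ring

lemma ewensPitman_consecutive_ratio {α' θ' N₁ N₂ : ℝ} (hα' : α' < 1) (m : ℕ)
    (h₁ : risingFact (1 - α') m * N₁ = m.factorial * risingFact (1 + θ') m)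
    (h₂ : risingFact (1 - α') (m + 1) * N₂ = (m + 1).factorial * risingFact (1 + θ') (m + 1)) :
    (m + 1 - α') * N₂ = (m + 1) * (m + 1 + θ') * N₁ := by
  have hR : risingFact (1 - α') m ≠ 0 := (risingFact_pos (by linarith) m).ne'
  rw [risingFact_succ, risingFact_succ, Nat.factorial_succ] at h₂
  push_cast at h₂
  apply mul_left_cancel₀ hR
  linear_combination h₂ - (m + 1) * (1 + θ' + m) * h₁

lemma ewensPitman_ratios_incompatible {θ α' θ' : ℝ} (hθ : 0 < θ)
    (h₁ : (1 - α') * (2 * θ + 1) = 1 + θ')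
    (h₂ : (2 - α') * (3 * θ ^ 2 + 6 * θ + 2) = 2 * (2 + θ') * (2 * θ + 1))
    (h₃ : (3 - α') * (4 * θ ^ 3 + 18 * θ ^ 2 + 22 * θ + 6)
      = 3 * (3 + θ') * (3 * θ ^ 2 + 6 * θ + 2)) : False := by
  have key : θ ^ 3 * (2 * θ ^ 2 + 3 * θ + 2) = 0 := by
    linear_combination (-(11 * θ ^ 4 + 28 * θ ^ 3 + 20 * θ ^ 2 + 4 * θ)) * h₁
      + (14 * θ ^ 3 + 27 * θ ^ 2 + 8 * θ) * h₂ - (5 * θ ^ 2 + 2 * θ) * h₃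
  have : 0 < θ ^ 3 * (2 * θ ^ 2 + 3 * θ + 2) := by positivity
  exact this.ne' key

theorem not_Ewens_Pitman (θ : ℝ) (hθ : 0 < θ) :
    ¬ ∃ α' θ' : ℝ, 0 ≤ α' ∧ α' < 1 ∧ -α' < θ' ∧
      ∀ n : ℕ, 1 ≤ n → n ≤ 5 →
        risingFact (1 - α') (n - 1) / risingFact (1 + θ') (n - 1)
          = (n.factorial : ℝ) / (risingFact θ n * n * genHarmonic θ n) := by
  rintro ⟨α', θ', -, hα', hθ', hmatch⟩
  have hcleared (m : ℕ) (hm : m ≤ 3) :=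
    (ewensPitman_eq_singleBlock_iff hθ (by linarith) m).mp
      (by simpa only [Nat.add_sub_cancel] using hmatch (m + 1) (by omega) (by omega))
  obtain ⟨hN₁, hN₂, hN₃, hN₄⟩ := risingFact_mul_genHarmonic_of_le_four hθ
  have h₁ := ewensPitman_consecutive_ratio hα' 0 (hcleared 0 (by norm_num)) (hcleared 1 (by norm_num))
  have h₂ := ewensPitman_consecutive_ratio hα' 1 (hcleared 1 (by norm_num)) (hcleared 2 (by norm_num))
  have h₃ := ewensPitman_consecutive_ratio hα' 2 (hcleared 2 (by norm_num)) (hcleared 3 (by norm_num))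
  rw [hN₁, hN₂] at h₁
  rw [hN₂, hN₃] at h₂
  rw [hN₃, hN₄] at h₃
  norm_num at h₁ h₂ h₃
  exact ewensPitman_ratios_incompatible hθ h₁ h₂ h₃
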